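/- In the vector space ℝ^ℚ of all real-valued functions on ℚ, the family consisting of the constant function 1, the indicator functions of singletons 1_{q} for q ∈ ℚ, and the indicator functions of open lower sets 1_{(-∞,q)} for q ∈ ℚ, is linearly independent. -/

import Mathlib

/-!
Suppose `c + ∑ a_q 1_{q} + ∑ b_q 1_{(-∞,q)} = 0` with finitely many nonzero coefficients, all
attached to a finite set `F` of points. Around each `q` there are points `x < q < y` with no
point of `F` other than `q` in `[x, y]`; the difference of the values at `x` and `y` is `b_q`, so
every `b_q` vanishes. Evaluating next at a point outside `F` gives `c = 0`, and finally at `q`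
gives `a_q = 0`.
-/

open Finset

theorem Finset.exists_Icc_inter_subset_singleton {α : Type*} [LinearOrder α] [DenselyOrdered α]
    [NoMinOrder α] [NoMaxOrder α] (F : Finset α) (q : α) :
    ∃ x < q, ∃ y > q, ↑F ∩ Set.Icc x y ⊆ {q} := by
  induction F using Finset.induction_on with
  | empty =>
    obtain ⟨x, hxq⟩ := exists_lt q
    obtain ⟨y, hqy⟩ := exists_gt q
    exact ⟨x, hxq, y, hqy, by simp⟩
  | insert a F _ ih =>
    obtain ⟨x, hxq, y, hqy, hF⟩ := ih
    rw [coe_insert]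
    rcases lt_trichotomy a q with haq | rfl | hqa
    · obtain ⟨x', hx', hx'q⟩ := _root_.exists_between (max_lt hxq haq)
      refine ⟨x', hx'q, y, hqy, ?_⟩
      rintro r ⟨hr | hr, hrx', hry⟩
      · exact absurd hrx' (hr ▸ (le_max_right x a).trans_lt hx').not_ge
      · exact hF ⟨hr, (le_max_left x a).trans (hx'.le.trans hrx'), hry⟩
    · refine ⟨x, hxq, y, hqy, ?_⟩
      rintro r ⟨hr | hr, hrxy⟩
      exacts [hr, hF ⟨hr, hrxy⟩]
    · obtain ⟨y', hqy', hy'⟩ := _root_.exists_between (lt_min hqy hqa)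
      refine ⟨x, hxq, y', hqy', ?_⟩
      rintro r ⟨hr | hr, hrx, hry'⟩
      · exact absurd hry' (hr ▸ hy'.trans_le (min_le_right y a)).not_ge
      · exact hF ⟨hr, hrx, hry'.trans (hy'.le.trans (min_le_left y a))⟩

variable {R α : Type*} [Ring R] [LinearOrder α]

variable (R α) in
noncomputable def stepFamily : Unit ⊕ α ⊕ α → α → R :=
  Sum.elim (fun _ _ => 1)
    (Sum.elim (fun q => Set.indicator {q} fun _ => 1) fun q => Set.indicator (Set.Iio q) fun _ => 1)

namespace stepFamily

@[simp]
theorem apply_const (u : Unit) (x : α) : stepFamily R α (.inl u) x = 1 := rfl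

@[simp]
theorem apply_single (q x : α) :
    stepFamily R α (.inr (.inl q)) x = if x = q then 1 else 0 := by
  simp [stepFamily, Pi.single_apply]

@[simp]
theorem apply_Iio (q x : α) : stepFamily R α (.inr (.inr q)) x = if x < q then 1 else 0 := by
  simp [stepFamily, Set.indicator_apply]

def jumpPoints (s : Finset (Unit ⊕ α ⊕ α)) : Finset α :=
  s.toRight.toLeft ∪ s.toRight.toRight

theorem single_mem_jumpPoints {s : Finset (Unit ⊕ α ⊕ α)} {q : α} (hq : .inr (.inl q) ∈ s) :
    q ∈ jumpPoints s := by
  simp [jumpPoints, hq]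

theorem Iio_mem_jumpPoints {s : Finset (Unit ⊕ α ⊕ α)} {q : α} (hq : .inr (.inr q) ∈ s) :
    q ∈ jumpPoints s := by
  simp [jumpPoints, hq]

variable {s : Finset (Unit ⊕ α ⊕ α)} {g : Unit ⊕ α ⊕ α → R}

theorem coeff_Iio_eq_zero [DenselyOrdered α] [NoMinOrder α] [NoMaxOrder α]
    (hf : ∀ x, ∑ j ∈ s, g j * stepFamily R α j x = 0) {q : α} (hq : .inr (.inr q) ∈ s) :
    g (.inr (.inr q)) = 0 := by
  obtain ⟨x, hxq, y, hqy, hxy⟩ := (jumpPoints s).exists_Icc_inter_subset_singleton q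
  have hflat : ∀ j ∈ s, j ≠ .inr (.inr q) → stepFamily R α j x = stepFamily R α j y := by
    rintro (u | r | r) hj hne
    · rfl
    · have hx : x ≠ r := by
        rintro rfl; exact hxq.ne (hxy ⟨single_mem_jumpPoints hj, le_rfl, (hxq.trans hqy).le⟩)
      have hy : y ≠ r := by
        rintro rfl; exact hqy.ne' (hxy ⟨single_mem_jumpPoints hj, (hxq.trans hqy).le, le_rfl⟩)
      simp [hx, hy]
    · have hrq : r ≠ q := by rintro rfl; exact hne rfl
      have hout : r < x ∨ y < r := by
        by_contra! h
        exact hrq (hxy ⟨Iio_mem_jumpPoints hj, h⟩)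
      rcases hout with h | h
      · simp [h.not_gt, (h.trans (hxq.trans hqy)).not_gt]
      · simp [h, (hxq.trans hqy).trans h]
  calc g (.inr (.inr q))
      = ∑ j ∈ s, g j * (stepFamily R α j x - stepFamily R α j y) := by
        rw [sum_eq_single_of_mem _ hq fun j hj hne => by rw [hflat j hj hne, sub_self, mul_zero]]
        simp [hxq, hqy.not_gt]
    _ = 0 := by simp only [mul_sub, sum_sub_distrib, hf, sub_zero]

theorem coeff_const_eq_zero [Infinite α] (hf : ∀ x, ∑ j ∈ s, g j * stepFamily R α j x = 0)
    (hIio : ∀ q, .inr (.inr q) ∈ s → g (.inr (.inr q)) = 0) {u : Unit} (hu : .inl u ∈ s) :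
    g (.inl u) = 0 := by
  obtain ⟨x, hx⟩ := Infinite.exists_notMem_finset (jumpPoints s)
  rw [← hf x, sum_eq_single_of_mem _ hu]
  · simp
  rintro (v | r | r) hj hne
  · exact absurd rfl hne
  · have hxr : x ≠ r := by rintro rfl; exact hx (single_mem_jumpPoints hj)
    simp [hxr]
  · simp [hIio r hj]

theorem coeff_single_eq_zero (hf : ∀ x, ∑ j ∈ s, g j * stepFamily R α j x = 0)
    (hconst : ∀ u, .inl u ∈ s → g (.inl u) = 0)
    (hIio : ∀ q, .inr (.inr q) ∈ s → g (.inr (.inr q)) = 0) {q : α} (hq : .inr (.inl q) ∈ s) :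
    g (.inr (.inl q)) = 0 := by
  rw [← hf q, sum_eq_single_of_mem _ hq]
  · simp
  rintro (u | r | r) hj hne
  · simp [hconst u hj]
  · have hqr : q ≠ r := by rintro rfl; exact hne rfl
    simp [hqr]
  · simp [hIio r hj]

end stepFamily

theorem linearIndependent_stepFamily [DenselyOrdered α] [NoMinOrder α] [NoMaxOrder α]
    [Nonempty α] : LinearIndependent R (stepFamily R α) := by
  refine linearIndependent_iff'.2 fun s g hsum => ?_
  have hf : ∀ x, ∑ j ∈ s, g j * stepFamily R α j x = 0 := fun x => by
    simpa using congrFun hsum x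
  have hIio := fun q => stepFamily.coeff_Iio_eq_zero hf (q := q)
  have hconst := fun u => stepFamily.coeff_const_eq_zero hf hIio (u := u)
  rintro (u | q | q)
  exacts [hconst u, stepFamily.coeff_single_eq_zero hf hconst hIio, hIio q]

/-- In `ℝ^ℚ`, the constant function `1`, the indicators of singletons, and the indicators
of open lower sets `(-∞, q)` form a linearly independent family. -/
theorem stmt5 :
    LinearIndependent ℝ
      (fun i : Unit ⊕ ℚ ⊕ ℚ =>
        Sum.elim (fun _ => (fun _ => (1 : ℝ) : ℚ → ℝ))
          (Sum.elim (fun q => Set.indicator {q} (fun _ => (1 : ℝ)))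
            (fun q => Set.indicator (Set.Iio q) (fun _ => (1 : ℝ)))) i) :=
  linearIndependent_stepFamily
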